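/- arXiv:2111.01565 — 4 statements merged into one kernel-verified Lean document; each statement's English description precedes it below -/
import Mathlib

section
/- The reduction map GL_d(ℤ) → GL_d(ℤ/4ℤ) is injective on finite subgroups; that is, if G is a finite subgroup of GL_d(ℤ) and g ∈ G reduces to the identity modulo 4, then g is the identity. -/
/-!
Let `w = 1 + B` be an integer matrix of prime order `p` with `q ^ K ∣ B` entrywise, `K ≥ 2`.
Modulo `q ^ (2K)` we have `B² = 0`, so `1 = (1 + B) ^ p = 1 + p • B`.
Hence `q ^ (2K) ∣ p • B`, which forces `q ^ (2K - 1) ∣ B`, and `2K - 1 ≥ K + 1`.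
So `B` is divisible by every power of `q`, i.e. `B = 0`. As every nontrivial element of finite
order has a nontrivial power of prime order, the kernel of reduction modulo `q ^ 2` contains
no nontrivial element of finite order.
-/

theorem one_add_pow_of_mul_self_eq_zero {R : Type*} [Semiring R] {b : R} (hb : b * b = 0)
    (n : ℕ) : (1 + b) ^ n = 1 + n • b := by
  induction n with
  | zero => simp
  | succ n ih =>
    rw [pow_succ, ih, mul_one_add, one_add_mul, smul_mul_assoc, hb, smul_zero, add_zero,
      succ_nsmul, add_assoc]

theorem Int.eq_zero_of_forall_pow_dvd {a b : ℤ} (ha : a.natAbs ≠ 1)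
    (h : ∀ k : ℕ, a ^ k ∣ b) : b = 0 := by
  by_contra hb
  obtain ⟨k, hk⟩ := Int.finiteMultiplicity_iff.mpr ⟨ha, hb⟩
  exact hk (h _)

theorem Int.pow_dvd_of_pow_succ_dvd_prime_mul {p q m : ℕ} (hp : p.Prime) (hq : q.Prime) {b : ℤ}
    (h : (q : ℤ) ^ (m + 1) ∣ p * b) : (q : ℤ) ^ m ∣ b := by
  rcases eq_or_ne p q with rfl | hpq
  · rw [pow_succ'] at h
    exact (mul_dvd_mul_iff_left (by exact_mod_cast hp.ne_zero)).mp h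
  · have hcop : IsCoprime ((q : ℤ) ^ (m + 1)) p :=
      Nat.isCoprime_iff_coprime.mpr (((Nat.coprime_primes hq hp).mpr hpq.symm).pow_left _)
    exact (pow_dvd_pow _ m.le_succ).trans (hcop.dvd_of_dvd_mul_left h)

section

variable {n : Type*} [Fintype n] [DecidableEq n]

theorem Matrix.mapMatrix_intCast_eq_zero_iff {N : ℕ} {B : Matrix n n ℤ} :
    (Int.castRingHom (ZMod N)).mapMatrix B = 0 ↔ ∀ i j, (N : ℤ) ∣ B i j := by
  simp [← Matrix.ext_iff, ZMod.intCast_zmod_eq_zero_iff_dvd]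

theorem Matrix.pow_succ_dvd_of_one_add_pow_prime_eq_one {p q K : ℕ} (hp : p.Prime)
    (hq : q.Prime) (hK : 2 ≤ K) {B : Matrix n n ℤ} (hB : (1 + B) ^ p = 1)
    (hdvd : ∀ i j, (q : ℤ) ^ K ∣ B i j) (i j : n) : (q : ℤ) ^ (K + 1) ∣ B i j := by
  set φ := (Int.castRingHom (ZMod (q ^ (K + K)))).mapMatrix (m := n)
  have hsq : φ B * φ B = 0 := by
    rw [← map_mul, mapMatrix_intCast_eq_zero_iff]
    intro i j
    rw [mul_apply, Nat.cast_pow, pow_add]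
    exact Finset.dvd_sum fun l _ => mul_dvd_mul (hdvd i l) (hdvd l j)
  have hpB : φ (p • B) = 0 := by
    have h := one_add_pow_of_mul_self_eq_zero hsq p
    rwa [← map_one φ, ← map_add, ← map_pow, hB, map_one, left_eq_add, ← map_nsmul] at h
  have hentry : (q : ℤ) ^ (K + K - 1 + 1) ∣ p * B i j := by
    simpa [Nat.sub_add_cancel (by omega : 1 ≤ K + K)] using
      (mapMatrix_intCast_eq_zero_iff.mp hpB) i j
  exact (pow_dvd_pow _ (by omega)).trans (Int.pow_dvd_of_pow_succ_dvd_prime_mul hp hq hentry)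

theorem Matrix.eq_one_of_pow_prime_eq_one {p q K : ℕ} (hp : p.Prime) (hq : q.Prime)
    (hK : 2 ≤ K) {M : Matrix n n ℤ} (hM : M ^ p = 1)
    (hred : (Int.castRingHom (ZMod (q ^ K))).mapMatrix M = 1) : M = 1 := by
  set B := M - 1
  have hMB : M = 1 + B := (add_sub_cancel _ _).symm
  have hall : ∀ k i j, (q : ℤ) ^ (K + k) ∣ B i j := by
    intro k
    induction k with
    | zero =>
      have h0 : (Int.castRingHom (ZMod (q ^ K))).mapMatrix B = 0 := by
        rw [map_sub, hred, map_one, sub_self]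
      exact_mod_cast mapMatrix_intCast_eq_zero_iff.mp h0
    | succ k ih =>
      exact pow_succ_dvd_of_one_add_pow_prime_eq_one hp hq (by omega : 2 ≤ K + k) (hMB ▸ hM) ih
  have hB : B = 0 := by
    ext i j
    refine Int.eq_zero_of_forall_pow_dvd (a := q) (by simpa using hq.ne_one) fun k => ?_
    exact (pow_dvd_pow _ (Nat.le_add_left k K)).trans (hall k i j)
  rw [hMB, hB, add_zero]

end

theorem Submonoid.eq_one_of_isOfFinOrder {M : Type*} [Monoid M] (S : Submonoid M)
    (hS : ∀ x ∈ S, ∀ p : ℕ, p.Prime → x ^ p = 1 → x = 1) {g : M} (hg : g ∈ S)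
    (hfin : IsOfFinOrder g) : g = 1 := by
  by_contra hne
  set n := orderOf g
  have hn : 0 < n := hfin.orderOf_pos
  have hp : n.minFac.Prime := Nat.minFac_prime fun h => hne (orderOf_eq_one_iff.mp h)
  have hpow : g ^ (n / n.minFac) = 1 := by
    refine hS _ (pow_mem hg _) _ hp ?_
    rw [← pow_mul, Nat.div_mul_cancel n.minFac_dvd, pow_orderOf_eq_one]
  exact pow_ne_one_of_lt_orderOf (Nat.div_pos (Nat.minFac_le hn) hp.pos).ne'
    (Nat.div_lt_self hn hp.one_lt) hpow

/-- The reduction map `GL_d(ℤ) → GL_d(ℤ/4ℤ)` is injective on finite subgroups: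
if `g` is an element of finite order of `GL_d(ℤ)` (e.g. a member of a finite subgroup)
reducing to the identity modulo 4, then `g = 1`. -/
theorem stmt0 (d : ℕ) (G : Subgroup (GL (Fin d) ℤ)) (hG : Finite G)
    (g : GL (Fin d) ℤ) (hg : g ∈ G)
    (h : Units.map ((Int.castRingHom (ZMod 4)).mapMatrix.toMonoidHom) g = 1) :
    g = 1 := by
  have hfin : IsOfFinOrder g :=
    Submonoid.isOfFinOrder_coe.mpr (isOfFinOrder_of_finite (⟨g, hg⟩ : G))
  refine (MonoidHom.mker (Units.map (Int.castRingHom (ZMod 4)).mapMatrix.toMonoidHom))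
    |>.eq_one_of_isOfFinOrder ?_ (MonoidHom.mem_mker.mpr h) hfin
  intro x hx p hp hxp
  refine Units.ext (Matrix.eq_one_of_pow_prime_eq_one hp Nat.prime_two le_rfl ?_ ?_)
  · rw [← Units.val_pow_eq_pow_val, hxp, Units.val_one]
  · exact congrArg Units.val hx
end

section
/- If a finite subgroup G of GL_d(ℤ) contains a nontrivial element acting trivially modulo 2, then G has a nontrivial normal elementary abelian 2-subgroup, namely the kernel of the reduction G → GL_d(ℤ/2ℤ). -/
open Matrix

/-!
If `A ≡ 1 mod 2` then `A² ≡ 1 mod 4`, so it suffices that an integer matrix of finite order with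
`A ≡ 1 mod 4` is the identity. Otherwise some power `B` of `A` has prime order `p` and still
`B ≡ 1 mod 4`. If `B = 1 + 2^m X` with `m ≥ 2`, expanding `(1 + 2^m X)^p = 1` binomially and
cancelling `2^m` gives `p X ≡ 0 mod 2^m` (for `p = 2` one factor `2` less), so `2 ∣ X`.
Hence `B - 1` is divisible by every power of `2`, i.e. `B = 1`.
-/

theorem four_dvd_sq_sub_one_of_two_dvd_sub_one {R : Type*} [Ring R] {A : R} (h : 2 ∣ A - 1) :
    4 ∣ A ^ 2 - 1 := by
  obtain ⟨C, hC⟩ := h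
  refine ⟨C + C ^ 2, ?_⟩
  rw [eq_add_of_sub_eq hC]
  noncomm_ring

section Ring

variable {R : Type*} [Ring R]

theorem exists_one_add_pow_eq (X : R) (q : ℕ) :
    ∃ D : R, (1 + X) ^ q = 1 + q • X + X ^ 2 * D := by
  induction q with
  | zero => exact ⟨0, by simp⟩
  | succ q ih =>
    obtain ⟨D, hD⟩ := ih
    refine ⟨q • 1 + D + D * X, ?_⟩
    rw [pow_succ, hD, succ_nsmul]
    simp only [add_mul, mul_add, one_mul, mul_one, smul_mul_assoc, mul_smul_comm, sq, mul_assoc]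
    abel

variable [IsAddTorsionFree R]

theorem two_dvd_of_one_add_two_pow_mul_pow_prime_eq_one {p m : ℕ} (hp : p.Prime) (hm : 2 ≤ m)
    {X : R} (h : (1 + 2 ^ m * X) ^ p = 1) : 2 ∣ X := by
  rw [← Nat.cast_ofNat, ← Nat.cast_pow, ← nsmul_eq_mul] at h
  obtain ⟨D, hD⟩ := exists_one_add_pow_eq (2 ^ m • X) p
  have hsum : 2 ^ m • (p • X + 2 ^ m • (X ^ 2 * D)) = 0 := by
    rw [h, add_assoc, left_eq_add] at hD
    rw [← hD]
    simp only [sq, smul_mul_assoc, mul_smul_comm, smul_add, smul_smul]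
    module
  have hcancel : p • X + 2 ^ m • (X ^ 2 * D) = 0 :=
    (smul_eq_zero.mp hsum).resolve_left (by positivity)
  obtain ⟨k, rfl⟩ := Nat.exists_eq_add_of_le' hm
  rcases hp.eq_two_or_odd' with rfl | ⟨r, rfl⟩
  · have htwice : 2 • (X + 2 ^ (k + 1) • (X ^ 2 * D)) = 0 := by
      linear_combination (norm := module) hcancel
    refine ⟨-(2 ^ k • (X ^ 2 * D)), ?_⟩
    rw [two_mul]
    linear_combination (norm := module) (smul_eq_zero.mp htwice).resolve_left two_ne_zero
  · refine ⟨-(r • X) - 2 ^ (k + 1) • (X ^ 2 * D), ?_⟩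
    rw [two_mul]
    linear_combination (norm := module) hcancel

theorem two_pow_dvd_sub_one_of_pow_prime_eq_one {p : ℕ} (hp : p.Prime) {A : R} (h4 : 4 ∣ A - 1)
    (hA : A ^ p = 1) (m : ℕ) : 2 ^ m ∣ A - 1 := by
  suffices ∀ k, (2 : R) ^ (k + 2) ∣ A - 1 from (pow_dvd_pow 2 (by omega)).trans (this m)
  intro k
  induction k with
  | zero => norm_num [h4]
  | succ k ih =>
    obtain ⟨X, hX⟩ := ih
    rw [eq_add_of_sub_eq' hX] at hA
    obtain ⟨Y, rfl⟩ := two_dvd_of_one_add_two_pow_mul_pow_prime_eq_one hp (by omega) hA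
    exact ⟨Y, by rw [hX, ← mul_assoc, ← pow_succ]⟩

end Ring

instance Matrix.instIsAddTorsionFree {m n α : Type*} [AddMonoid α] [IsAddTorsionFree α] :
    IsAddTorsionFree (Matrix m n α) :=
  inferInstanceAs (IsAddTorsionFree (m → n → α))

namespace Matrix

variable {n : Type*} [Fintype n] [DecidableEq n]

theorem natCast_dvd_iff {k : ℕ} {M : Matrix n n ℤ} :
    (k : Matrix n n ℤ) ∣ M ↔ ∀ i j, (k : ℤ) ∣ M i j := by
  constructor
  · rintro ⟨C, rfl⟩ i j
    rw [← nsmul_eq_mul, smul_apply, nsmul_eq_mul]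
    exact dvd_mul_right _ _
  · intro h
    refine ⟨of fun i j ↦ M i j / k, ?_⟩
    ext i j
    rw [← nsmul_eq_mul, smul_apply, nsmul_eq_mul, of_apply, Int.mul_ediv_cancel' (h i j)]

theorem map_intCast_eq_one_iff {k : ℕ} {A : Matrix n n ℤ} :
    (Int.castRingHom (ZMod k)).mapMatrix A = 1 ↔ (k : Matrix n n ℤ) ∣ A - 1 := by
  rw [natCast_dvd_iff, ← sub_eq_zero, ← map_one (Int.castRingHom (ZMod k)).mapMatrix, ← map_sub]
  simp only [← Matrix.ext_iff, RingHom.mapMatrix_apply, map_apply, zero_apply, eq_intCast,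
    ZMod.intCast_zmod_eq_zero_iff_dvd]

theorem eq_zero_of_forall_two_pow_dvd {M : Matrix n n ℤ} (h : ∀ m, (2 : Matrix n n ℤ) ^ m ∣ M) :
    M = 0 := by
  ext i j
  have hdvd : (2 : ℤ) ^ (M i j).natAbs ∣ M i j := by
    have := h (M i j).natAbs
    rw [← Nat.cast_ofNat, ← Nat.cast_pow, natCast_dvd_iff] at this
    exact_mod_cast this i j
  exact Int.eq_zero_of_dvd_of_natAbs_lt_natAbs hdvd (by simpa using Nat.lt_two_pow_self)

theorem eq_one_of_isOfFinOrder_of_four_dvd_sub_one {A : Matrix n n ℤ} (hA : IsOfFinOrder A)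
    (h4 : 4 ∣ A - 1) : A = 1 := by
  by_contra hA1
  obtain ⟨p, hp, hpA⟩ := Nat.exists_prime_and_dvd (orderOf_eq_one_iff.not.mpr hA1)
  set B := A ^ (orderOf A / p)
  have hB : orderOf B = p := orderOf_pow_orderOf_div hA.orderOf_pos.ne' hpA
  have hB4 : 4 ∣ B - 1 := h4.trans (sub_one_dvd_pow_sub_one A _)
  have hB1 : B = 1 := sub_eq_zero.mp <| eq_zero_of_forall_two_pow_dvd <|
    two_pow_dvd_sub_one_of_pow_prime_eq_one hp hB4 (hB ▸ pow_orderOf_eq_one B)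
  rw [hB1, orderOf_one] at hB
  exact hp.one_lt.ne hB

theorem sq_eq_one_of_isOfFinOrder_of_two_dvd_sub_one {A : Matrix n n ℤ} (hA : IsOfFinOrder A)
    (h2 : 2 ∣ A - 1) : A ^ 2 = 1 :=
  eq_one_of_isOfFinOrder_of_four_dvd_sub_one hA.pow (four_dvd_sq_sub_one_of_two_dvd_sub_one h2)

end Matrix

/-- If a finite subgroup `G ≤ GL_d(ℤ)` contains a nontrivial element acting trivially
modulo 2, then the kernel of the reduction `G → GL_d(ℤ/2ℤ)` is a nontrivial normal
subgroup of `G` which is elementary abelian of exponent 2. -/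
theorem stmt2 (d : ℕ) (G : Subgroup (GL (Fin d) ℤ)) (hG : Finite G)
    (red : GL (Fin d) ℤ →* GL (Fin d) (ZMod 2))
    (hred : red = Units.map ((Int.castRingHom (ZMod 2)).mapMatrix.toMonoidHom))
    (hnt : ∃ g ∈ G, g ≠ 1 ∧ red g = 1) :
    ((red.ker).subgroupOf G).Normal ∧
    (red.ker).subgroupOf G ≠ ⊥ ∧
    ∀ g : G, g ∈ (red.ker).subgroupOf G → g ≠ 1 → orderOf g = 2 := by
  refine ⟨Subgroup.normal_subgroupOf, ?_, fun g hg hg1 ↦ orderOf_eq_prime ?_ hg1⟩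
  · obtain ⟨g, hgG, hg1, hgred⟩ := hnt
    refine Subgroup.ne_bot_iff_exists_ne_one.mpr ⟨⟨⟨g, hgG⟩, hgred⟩, fun h ↦ hg1 ?_⟩
    exact congrArg (fun x : red.ker.subgroupOf G ↦ ((x : G) : GL (Fin d) ℤ)) h
  · have hg2 : red g = 1 := hg
    rw [hred] at hg2
    have h2 : (2 : Matrix (Fin d) (Fin d) ℤ) ∣ (g : GL (Fin d) ℤ).val - 1 :=
      map_intCast_eq_one_iff.mp (congrArg Units.val hg2)
    have hfin : IsOfFinOrder (g : GL (Fin d) ℤ).val :=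
      ((Units.coeHom _).comp G.subtype).isOfFinOrder (isOfFinOrder_of_finite g)
    exact Subtype.ext <| Units.ext <| by
      simpa using sq_eq_one_of_isOfFinOrder_of_two_dvd_sub_one hfin h2
end

section
/- In the quaternion algebra B = (D/m, m / ℚ) with i² = D/m, j² = m, k = ij, suppose 2 | D, m ≡ 3 mod 4, and D squarefree. Then O = ℤ + ½(1 + j + k)ℤ + ½(1 + j − k)ℤ + ½(i + k)ℤ is an order of B of reduced discriminant D. -/
open Quaternion

/-!
Write `a = D/m`, `b = m` and `e = (1, (1+j+k)/2, (1+j-k)/2, (i+k)/2)`. The coordinates of a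
quaternion `x` in the `ℚ`-basis `e` are `re - imJ`, `imJ + imK - imI`, `imJ - imK + imI` and
`2 imI`, so `O = span ℤ e` is the set of quaternions with integral coordinates. Since `D` is
squarefree and even and `m` is odd, `a ≡ 2` and `b ≡ 3 (mod 4)`; under `b` odd and
`a ≡ b - 1 (mod 4)` every product `e i * e j` has integral coordinates, so `O` is a ring. Being
finitely generated as a `ℤ`-module, it consists of integral elements. Finally the Gram matrix
of `trd(x ȳ)` on `e` has determinant `(ab)² = D²`: `O` has index 4 in `ℤ⟨1, i, j, k⟩`, whose
Gram determinant is `16 a²b²`.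
-/

open Submodule in
theorem Submodule.mul_mem_span_of_forall_mul_mem {R A : Type*} [CommSemiring R] [Semiring A]
    [Algebra R A] {s : Set A} (hs : ∀ x ∈ s, ∀ y ∈ s, x * y ∈ span R s) {x y : A}
    (hx : x ∈ span R s) (hy : y ∈ span R s) : x * y ∈ span R s := by
  have hle : span R s * span R s ≤ span R s := by
    rw [span_mul_span, span_le]
    rintro _ ⟨x, hx, y, hy, rfl⟩
    exact hs x hx y hy
  exact hle (mul_mem_mul hx hy)

open Submodule in
theorem Submodule.isIntegral_of_mem_span {R A : Type*} [CommRing R] [Ring A] [Algebra R A]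
    {s : Set A} (hs : s.Finite) (h1 : 1 ∈ span R s)
    (hmul : ∀ x ∈ span R s, ∀ y ∈ span R s, x * y ∈ span R s) {x : A}
    (hx : x ∈ span R s) : IsIntegral R x :=
  IsIntegral.of_mem_of_fg ((span R s).toSubalgebra h1 fun x y hx hy => hmul x hx y hy)
    (by rw [toSubalgebra_toSubmodule]; exact fg_span hs) x hx

theorem Int.emod_four_eq_two_of_squarefree_of_even {n : ℤ} (hsf : Squarefree n) (he : Even n) :
    n % 4 = 2 := by
  have h4 : ¬ (2 * 2 : ℤ) ∣ n := fun h => by simpa [Int.isUnit_iff] using hsf 2 h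
  obtain ⟨k, rfl⟩ := he
  omega

namespace QuaternionAlgebra

open Submodule

variable {a b : ℚ}

def orderBasis (a b : ℚ) : Fin 4 → ℍ[ℚ, a, b] :=
  ![1, ⟨1/2, 0, 1/2, 1/2⟩, ⟨1/2, 0, 1/2, -(1/2)⟩, ⟨0, 1/2, 0, 1/2⟩]

def orderBasisCoords (x : ℍ[ℚ, a, b]) : Fin 4 → ℚ :=
  ![x.re - x.imJ, x.imJ + x.imK - x.imI, x.imJ - x.imK + x.imI, 2 * x.imI]

theorem sum_orderBasisCoords_smul (x : ℍ[ℚ, a, b]) :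
    ∑ k, orderBasisCoords x k • orderBasis a b k = x := by
  ext <;>
  · simp only [orderBasisCoords, orderBasis, Fin.sum_univ_four, Matrix.cons_val, smul_mk,
      smul_eq_mul, re_add, imI_add, imJ_add, imK_add, re_smul, imI_smul, imJ_smul, imK_smul,
      re_one, imI_one, imJ_one, imK_one]
    ring

theorem span_orderBasis_eq_top : span ℚ (Set.range (orderBasis a b)) = ⊤ :=
  eq_top_iff'.2 fun x => (mem_span_range_iff_exists_fun ℚ).2
    ⟨orderBasisCoords x, sum_orderBasisCoords_smul x⟩

theorem linearIndependent_orderBasis : LinearIndependent ℚ (orderBasis a b) :=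
  linearIndependent_of_top_le_span_of_card_eq_finrank span_orderBasis_eq_top.ge
    (by simp [finrank_eq_four])

theorem mem_span_orderBasis_of_coords_eq {x : ℍ[ℚ, a, b]} (c : Fin 4 → ℤ)
    (hc : ∀ k, orderBasisCoords x k = c k) : x ∈ span ℤ (Set.range (orderBasis a b)) := by
  rw [← sum_orderBasisCoords_smul x, mem_span_range_iff_exists_fun]
  exact ⟨c, by simp_rw [hc, Int.cast_smul_eq_zsmul]⟩

theorem orderBasis_mul_mem_span {a b : ℤ} (hb : Odd b) (hab : a ≡ b - 1 [ZMOD 4])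
    (i j : Fin 4) :
    orderBasis a b i * orderBasis a b j ∈ span ℤ (Set.range (orderBasis a b)) := by
  obtain ⟨u, rfl⟩ := hb
  obtain ⟨v, hv⟩ := hab.dvd
  obtain rfl : a = 2 * u - 4 * v := by linarith
  -- entry `(i, j)` lists the coordinates of `e i * e j`
  refine mem_span_orderBasis_of_coords_eq ((![
    ![![1, 0, 0, 0], ![0, 1, 0, 0], ![0, 0, 1, 0], ![0, 0, 0, 1]],
    ![![0, 1, 0, 0], ![v - (u - 2 * v) * u, 1, 0, 0],
      ![u - v + (u - 2 * v) * u, -u, u + 1, 2 * u + 1], ![-(u - 2 * v) * u, v, v - u, -u]],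
    ![![0, 0, 1, 0], ![u - v + (u - 2 * v) * u, u + 1, -u, -(2 * u + 1)],
      ![v - (u - 2 * v) * u, 0, 1, 0], ![(u - 2 * v) * u, u - v, -v, -u]],
    ![![0, 0, 0, 1], ![-(u - 2 * v) * (u + 1), -v, u - v, u + 1],
      ![(u - 2 * v) * (u + 1), v - u, v, u + 1], ![-(u - 2 * v) * u, 0, 0, 0]]]
    : Fin 4 → Fin 4 → Fin 4 → ℤ) i j) ?_
  revert i j
  simp only [Fin.forall_fin_succ, IsEmpty.forall_iff, and_true, Matrix.cons_val_zero,
    Matrix.cons_val_succ, orderBasis, orderBasisCoords, one_mul, mul_one, mk_mul_mk, re_one,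
    imI_one, imJ_one, imK_one]
  push_cast
  constructorm* _ ∧ _
  all_goals ring

theorem mul_mem_span_orderBasis {a b : ℤ} (hb : Odd b) (hab : a ≡ b - 1 [ZMOD 4])
    {x y : ℍ[ℚ, a, b]} (hx : x ∈ span ℤ (Set.range (orderBasis a b)))
    (hy : y ∈ span ℤ (Set.range (orderBasis a b))) :
    x * y ∈ span ℤ (Set.range (orderBasis a b)) := by
  refine mul_mem_span_of_forall_mul_mem ?_ hx hy
  rintro _ ⟨i, rfl⟩ _ ⟨j, rfl⟩
  exact orderBasis_mul_mem_span hb hab i j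

theorem det_trd_gram_orderBasis :
    (Matrix.of fun i j => 2 * (orderBasis a b i * star (orderBasis a b j)).re).det =
      (a * b) ^ 2 := by
  simp [Matrix.det_succ_row_zero, Fin.sum_univ_succ, Fin.succAbove, orderBasis]
  ring

end QuaternionAlgebra

theorem stmt5_general (D m : ℤ) (hsf : Squarefree D) (hm : m ∣ D)
    (hm4 : m % 4 = 3) (h2 : 2 ∣ D)
    (e : Fin 4 → ℍ[ℚ, ((D / m : ℤ) : ℚ), (m : ℚ)])
    (he : e = ![1, ⟨1/2, 0, 1/2, 1/2⟩, ⟨1/2, 0, 1/2, -(1/2)⟩, ⟨0, 1/2, 0, 1/2⟩]) :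
    (1 : ℍ[ℚ, ((D / m : ℤ) : ℚ), (m : ℚ)]) ∈ Submodule.span ℤ (Set.range e) ∧
    (∀ x ∈ Submodule.span ℤ (Set.range e), ∀ y ∈ Submodule.span ℤ (Set.range e),
      x * y ∈ Submodule.span ℤ (Set.range e)) ∧
    (∀ x ∈ Submodule.span ℤ (Set.range e), IsIntegral ℤ x) ∧
    LinearIndependent ℚ e ∧
    Submodule.span ℚ (Set.range e) = ⊤ ∧
    |(Matrix.of fun a b => 2 * (e a * star (e b)).re).det| = (D : ℚ) ^ 2 := by
  have hmD : m * (D / m) = D := Int.mul_ediv_cancel' hm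
  have hm_odd : Odd m := Int.odd_iff.2 (by omega)
  have hn_even : Even (D / m) :=
    (Int.even_mul.1 (by rwa [hmD, even_iff_two_dvd])).resolve_left
      (Int.not_even_iff_odd.2 hm_odd)
  have hsf' : Squarefree (m * (D / m)) := by rwa [hmD]
  have hn4 : D / m % 4 = 2 := Int.emod_four_eq_two_of_squarefree_of_even hsf'.of_mul_right hn_even
  have hab : D / m ≡ m - 1 [ZMOD 4] := by unfold Int.ModEq; omega
  have hone : 1 ∈ Submodule.span ℤ (Set.range e) := Submodule.subset_span ⟨0, by rw [he]; rfl⟩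
  obtain rfl : e = QuaternionAlgebra.orderBasis _ _ := he
  have hmul := fun x (hx : x ∈ _) y (hy : y ∈ _) =>
    QuaternionAlgebra.mul_mem_span_orderBasis hm_odd hab hx hy
  refine ⟨hone, hmul,
    fun x hx => Submodule.isIntegral_of_mem_span (Set.finite_range _) hone hmul hx,
    QuaternionAlgebra.linearIndependent_orderBasis, QuaternionAlgebra.span_orderBasis_eq_top,
    ?_⟩
  rw [QuaternionAlgebra.det_trd_gram_orderBasis, ← Int.cast_mul, mul_comm, hmD, abs_sq]

/-- In the quaternion algebra `B = (D/m, m / ℚ)` (so `i² = D/m`, `j² = m`, `k = ij = -ji`)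
with `D` positive squarefree, `m ∣ D`, `2 ∣ D` and `m ≡ 3 mod 4`, the lattice
`O = ℤ + ½(1+j+k)ℤ + ½(1+j-k)ℤ + ½(i+k)ℤ` is an order of `B` of reduced discriminant `D`:
it contains 1, is closed under multiplication, consists of elements integral over `ℤ`,
is a full lattice (the four generators are a `ℚ`-basis of `B`), and the determinant of the
Gram matrix of reduced traces `trd(e_a ē_b)` has absolute value `D²`. -/
theorem stmt5 (D m : ℤ) (hD : 0 < D) (hsf : Squarefree D) (hm : m ∣ D)
    (hm4 : m % 4 = 3) (h2 : 2 ∣ D)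
    (e : Fin 4 → ℍ[ℚ, ((D / m : ℤ) : ℚ), (m : ℚ)])
    (he : e = ![1, ⟨1/2, 0, 1/2, 1/2⟩, ⟨1/2, 0, 1/2, -(1/2)⟩, ⟨0, 1/2, 0, 1/2⟩]) :
    (1 : ℍ[ℚ, ((D / m : ℤ) : ℚ), (m : ℚ)]) ∈ Submodule.span ℤ (Set.range e) ∧
    (∀ x ∈ Submodule.span ℤ (Set.range e), ∀ y ∈ Submodule.span ℤ (Set.range e),
      x * y ∈ Submodule.span ℤ (Set.range e)) ∧
    (∀ x ∈ Submodule.span ℤ (Set.range e), IsIntegral ℤ x) ∧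
    LinearIndependent ℚ e ∧
    Submodule.span ℚ (Set.range e) = ⊤ ∧
    |(Matrix.of fun a b => 2 * (e a * star (e b)).re).det| = (D : ℚ) ^ 2 :=
  stmt5_general D m hsf hm hm4 h2 e he
end

section
/- In the quaternion algebra B = (D/m, m / ℚ) with m ≡ 1 mod 4 and D squarefree divisible by m, the lattice O = ℤ + ½(1 + j)ℤ + kℤ + ½(i + k)ℤ is an order of reduced discriminant D. -/
/-!
Write `m = 4t + 1` and `a = D / m`. Then `ω = (1 + j)/2` satisfies `ω² = ω + t`, and every product
of two of the generators `1, ω, k, (i + k)/2` is an integral combination of them, so `O` is a ring;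
being a finitely generated `ℤ`-module, it consists of integral elements. On the basis `1, i, j, k`
the reduced trace form `trd(x ȳ)` is `diag(2, -2a, -2m, 2am)`, of determinant `16 (am)²`, and the
generators of `O` are obtained from that basis by a matrix of determinant `±1/4`; hence the
discriminant of `O` is `(am)² = D²`.
-/

open Quaternion

namespace Submodule

variable {R A : Type*}

theorem mul_mem_span_of_mul_mem [CommSemiring R] [Semiring A] [Algebra R A] {s : Set A}
    (hs : ∀ x ∈ s, ∀ y ∈ s, x * y ∈ span R s) {x y : A} (hx : x ∈ span R s)
    (hy : y ∈ span R s) : x * y ∈ span R s := by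
  have hle : span R s * span R s ≤ span R s := by
    rw [span_mul_span, span_le]
    exact Set.mul_subset_iff.mpr hs
  exact hle (mul_mem_mul hx hy)

theorem isIntegral_of_mem_span_s6 [CommRing R] [Ring A] [Algebra R A] {s : Set A}
    (hfin : s.Finite) (hone : 1 ∈ span R s) (hs : ∀ x ∈ s, ∀ y ∈ s, x * y ∈ span R s) {x : A}
    (hx : x ∈ span R s) : IsIntegral R x :=
  IsIntegral.of_mem_of_fg ((span R s).toSubalgebra hone fun _ _ => mul_mem_span_of_mul_mem hs)
    (by rw [toSubalgebra_toSubmodule]; exact fg_span hfin) x hx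

end Submodule

namespace QuaternionAlgebra

section Field

variable {K : Type*} [Field K] (a b : K)

/-- The family `1, (1 + j)/2, k, (i + k)/2` in `ℍ[K, a, b]`. -/
def halfIntBasis : Fin 4 → ℍ[K, a, b] :=
  ![1, ⟨1/2, 0, 1/2, 0⟩, ⟨0, 0, 0, 1⟩, ⟨0, 1/2, 0, 1/2⟩]

variable [NeZero (2 : K)]

theorem span_halfIntBasis : Submodule.span K (Set.range (halfIntBasis a b)) = ⊤ := by
  refine eq_top_iff.mpr fun x _ => (Submodule.mem_span_range_iff_exists_fun K).mpr ?_
  refine ⟨![x.re - x.imJ, 2 * x.imJ, x.imK - x.imI, 2 * x.imI], ?_⟩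
  ext <;> simp [halfIntBasis, Fin.sum_univ_four] <;> field_simp <;> ring

theorem linearIndependent_halfIntBasis : LinearIndependent K (halfIntBasis a b) :=
  linearIndependent_of_top_le_span_of_card_eq_finrank (span_halfIntBasis a b).ge
    (by simp [finrank_eq_four])

theorem det_trace_form_halfIntBasis :
    (Matrix.of fun x y => 2 * (halfIntBasis a b x * star (halfIntBasis a b y)).re).det =
      (a * b) ^ 2 := by
  simp [halfIntBasis, Matrix.det_succ_row_zero, Fin.sum_univ_succ, Fin.succAbove, re_mul]
  field_simp
  ring

end Field

theorem halfIntBasis_mul_mem_span (a b : ℤ) (hb : b % 4 = 1) (x y : Fin 4) :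
    halfIntBasis (a : ℚ) b x * halfIntBasis (a : ℚ) b y ∈
      Submodule.span ℤ (Set.range (halfIntBasis (a : ℚ) b)) := by
  obtain ⟨t, rfl⟩ : ∃ t, b = 4 * t + 1 := ⟨b / 4, by omega⟩
  rw [Submodule.mem_span_range_iff_exists_fun]
  -- coordinates of the products, row by row; `ω² = t + ω` (entry `![t, 1, 0, 0]`) needs `b = 4t + 1`
  fin_cases x <;> fin_cases y <;>
    [refine ⟨![1, 0, 0, 0], ?_⟩; refine ⟨![0, 1, 0, 0], ?_⟩;
      refine ⟨![0, 0, 1, 0], ?_⟩; refine ⟨![0, 0, 0, 1], ?_⟩;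
    refine ⟨![0, 1, 0, 0], ?_⟩; refine ⟨![t, 1, 0, 0], ?_⟩;
      refine ⟨![0, 0, 2 * t + 1, -(4 * t + 1)], ?_⟩; refine ⟨![0, 0, t, -2 * t], ?_⟩;
    refine ⟨![0, 0, 1, 0], ?_⟩; refine ⟨![0, 0, -2 * t, 4 * t + 1], ?_⟩;
      refine ⟨![-a * (4 * t + 1), 0, 0, 0], ?_⟩; refine ⟨![-2 * a * t, -a, 0, 0], ?_⟩;
    refine ⟨![0, 0, 0, 1], ?_⟩; refine ⟨![0, 0, -t, 2 * t + 1], ?_⟩;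
      refine ⟨![-a * (2 * t + 1), a, 0, 0], ?_⟩; refine ⟨![-a * t, 0, 0, 0], ?_⟩] <;>
    ext <;> simp [halfIntBasis, Fin.sum_univ_four] <;> ring

end QuaternionAlgebra

theorem stmt6_general (D m : ℤ) (hm : m ∣ D)
    (hm4 : m % 4 = 1)
    (e : Fin 4 → ℍ[ℚ, ((D / m : ℤ) : ℚ), (m : ℚ)])
    (he : e = ![1, ⟨1/2, 0, 1/2, 0⟩, ⟨0, 0, 0, 1⟩, ⟨0, 1/2, 0, 1/2⟩]) :
    (1 : ℍ[ℚ, ((D / m : ℤ) : ℚ), (m : ℚ)]) ∈ Submodule.span ℤ (Set.range e) ∧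
    (∀ x ∈ Submodule.span ℤ (Set.range e), ∀ y ∈ Submodule.span ℤ (Set.range e),
      x * y ∈ Submodule.span ℤ (Set.range e)) ∧
    (∀ x ∈ Submodule.span ℤ (Set.range e), IsIntegral ℤ x) ∧
    LinearIndependent ℚ e ∧
    Submodule.span ℚ (Set.range e) = ⊤ ∧
    |(Matrix.of fun a b => 2 * (e a * star (e b)).re).det| = (D : ℚ) ^ 2 := by
  obtain rfl : e = QuaternionAlgebra.halfIntBasis _ _ := he
  set e := QuaternionAlgebra.halfIntBasis ((D / m : ℤ) : ℚ) (m : ℚ)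
  have hone : (1 : ℍ[ℚ, ((D / m : ℤ) : ℚ), (m : ℚ)]) ∈ Submodule.span ℤ (Set.range e) :=
    Submodule.subset_span ⟨0, rfl⟩
  have hmul : ∀ x ∈ Set.range e, ∀ y ∈ Set.range e, x * y ∈ Submodule.span ℤ (Set.range e) := by
    rintro _ ⟨i, rfl⟩ _ ⟨j, rfl⟩
    exact QuaternionAlgebra.halfIntBasis_mul_mem_span (D / m) m hm4 i j
  have hdisc : ((D / m : ℤ) : ℚ) * m = D := by exact_mod_cast Int.ediv_mul_cancel hm
  refine ⟨hone, fun x hx y hy => Submodule.mul_mem_span_of_mul_mem hmul hx hy,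
    fun x hx => Submodule.isIntegral_of_mem_span_s6 (Set.finite_range _) hone hmul hx,
    QuaternionAlgebra.linearIndependent_halfIntBasis _ _,
    QuaternionAlgebra.span_halfIntBasis _ _, ?_⟩
  rw [QuaternionAlgebra.det_trace_form_halfIntBasis, hdisc, abs_sq]

/-- In the quaternion algebra `B = (D/m, m / ℚ)` (so `i² = D/m`, `j² = m`, `k = ij = -ji`)
with `D` positive squarefree, `m ∣ D`, and `m ≡ 1 mod 4`, the lattice
`O = ℤ + ½(1+j)ℤ + kℤ + ½(i+k)ℤ` is an order of `B` of reduced discriminant `D`: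
it contains 1, is closed under multiplication, consists of elements integral over `ℤ`,
is a full lattice (the four generators are a `ℚ`-basis of `B`), and the determinant of the
Gram matrix of reduced traces `trd(e_a ē_b)` has absolute value `D²`. -/
theorem stmt6 (D m : ℤ) (hD : 0 < D) (hsf : Squarefree D) (hm : m ∣ D)
    (hm4 : m % 4 = 1)
    (e : Fin 4 → ℍ[ℚ, ((D / m : ℤ) : ℚ), (m : ℚ)])
    (he : e = ![1, ⟨1/2, 0, 1/2, 0⟩, ⟨0, 0, 0, 1⟩, ⟨0, 1/2, 0, 1/2⟩]) :
    (1 : ℍ[ℚ, ((D / m : ℤ) : ℚ), (m : ℚ)]) ∈ Submodule.span ℤ (Set.range e) ∧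
    (∀ x ∈ Submodule.span ℤ (Set.range e), ∀ y ∈ Submodule.span ℤ (Set.range e),
      x * y ∈ Submodule.span ℤ (Set.range e)) ∧
    (∀ x ∈ Submodule.span ℤ (Set.range e), IsIntegral ℤ x) ∧
    LinearIndependent ℚ e ∧
    Submodule.span ℚ (Set.range e) = ⊤ ∧
    |(Matrix.of fun a b => 2 * (e a * star (e b)).re).det| = (D : ℚ) ^ 2 :=
  stmt6_general D m hm hm4 e he
end
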